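/- For any integer a ≥ 3, the polynomial P(x) = x⁴ + ax + 1 has exactly three roots (counted with multiplicity, in ℂ) of absolute value greater than 1 and one root of absolute value less than 1. -/

import Mathlib

open Polynomial

private lemma haC {a : ℤ} (ha : 3 ≤ a) : ‖((a:ℤ):ℂ)‖ = (a:ℝ) := by
  rw [← Complex.ofReal_intCast, Complex.norm_real, Real.norm_eq_abs, abs_of_nonneg]
  exact_mod_cast (by linarith : (0:ℤ) ≤ a)

private lemma abs_le_two_thirds {a : ℤ} (ha : 3 ≤ a) {z : ℂ}
    (hz : z ^ 4 + (a:ℂ) * z + 1 = 0) (h1 : ‖z‖ < 1) :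
    ‖z‖ ≤ 2 / 3 := by
  have key : (a:ℂ) * z = -(z ^ 4 + 1) := by linear_combination hz
  have h2 := congrArg Norm.norm key
  rw [norm_mul, norm_neg, haC ha] at h2
  have h3 : ‖z ^ 4 + 1‖ ≤ 2 := by
    calc ‖z ^ 4 + 1‖ ≤ ‖z ^ 4‖ + ‖1‖ :=
      norm_add_le _ _
    _ = ‖z‖ ^ 4 + 1 := by rw [norm_pow, norm_one]
    _ ≤ 2 := by nlinarith [norm_nonneg z, pow_lt_one₀ (norm_nonneg z) h1 (by norm_num : (4:ℕ) ≠ 0)]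
  have ha' : (3:ℝ) ≤ (a:ℝ) := by exact_mod_cast ha
  nlinarith [norm_nonneg z]

private lemma roots_small_eq {a : ℤ} (ha : 3 ≤ a) {z w : ℂ}
    (hz : z ^ 4 + (a:ℂ) * z + 1 = 0) (hw : w ^ 4 + (a:ℂ) * w + 1 = 0)
    (h1 : ‖z‖ < 1) (h2 : ‖w‖ < 1) : z = w := by
  have hz' := abs_le_two_thirds ha hz h1
  have hw' := abs_le_two_thirds ha hw h2
  by_contra hne
  have hzw : z - w ≠ 0 := sub_ne_zero.mpr hne
  have key : (a:ℂ) = -(z^3 + z^2*w + z*w^2 + w^3) := by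
    apply mul_left_cancel₀ hzw
    linear_combination hz - hw
  have h3 := congrArg Norm.norm key
  rw [norm_neg, haC ha] at h3
  have hb : ‖z^3 + z^2*w + z*w^2 + w^3‖ ≤ 32/27 := by
    calc ‖z^3 + z^2*w + z*w^2 + w^3‖
        ≤ ‖z^3 + z^2*w + z*w^2‖ + ‖w^3‖ := norm_add_le _ _
      _ ≤ (‖z^3 + z^2*w‖ + ‖z*w^2‖) + ‖w^3‖ := by
          gcongr; exact norm_add_le _ _
      _ ≤ ((‖z^3‖ + ‖z^2*w‖) + ‖z*w^2‖) + ‖w^3‖ := by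
          gcongr; exact norm_add_le _ _
      _ = ‖z‖^3 + ‖z‖^2 * ‖w‖ + ‖z‖ * ‖w‖^2 + ‖w‖^3 := by
          simp [norm_mul, norm_pow]
      _ ≤ 32/27 := by nlinarith [norm_nonneg z, norm_nonneg w]
  have ha' : (3:ℝ) ≤ (a:ℝ) := by exact_mod_cast ha
  linarith

private lemma no_unit_root {a : ℤ} (ha : 3 ≤ a) {z : ℂ}
    (hz : z ^ 4 + (a:ℂ) * z + 1 = 0) (h1 : ‖z‖ = 1) : False := by
  have key : (a:ℂ) * z = -(z ^ 4 + 1) := by linear_combination hz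
  have h2 := congrArg Norm.norm key
  rw [norm_mul, norm_neg, haC ha, h1, mul_one] at h2
  have h3 : ‖z ^ 4 + 1‖ ≤ 2 := by
    calc ‖z ^ 4 + 1‖ ≤ ‖z ^ 4‖ + ‖1‖ :=
      norm_add_le _ _
    _ = ‖z‖ ^ 4 + 1 := by rw [norm_pow, norm_one]
    _ ≤ 2 := by rw [h1]; norm_num
  have ha' : (3:ℝ) ≤ (a:ℝ) := by exact_mod_cast ha
  linarith

/-- For any integer `a ≥ 3`, the polynomial `P(x) = x⁴ + ax + 1`
has exactly three roots in `ℂ` (with multiplicity) of absolute value greater than `1`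
and one root of absolute value less than `1`. -/
theorem stmt18 (a : ℤ) (ha : 3 ≤ a) :
    ((X ^ 4 + C (a : ℂ) * X + 1 : ℂ[X]).roots.filter
        fun z => 1 < ‖z‖).card = 3 ∧
    ((X ^ 4 + C (a : ℂ) * X + 1 : ℂ[X]).roots.filter
        fun z => ‖z‖ < 1).card = 1 := by
  set P : ℂ[X] := X ^ 4 + C (a:ℂ) * X + 1 with hPdef
  have ha' : (3:ℝ) ≤ (a:ℝ) := by exact_mod_cast ha
  have hP0 : P ≠ 0 := by
    intro h
    have : P.eval 0 = 0 := by rw [h]; simp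
    simp [hPdef] at this
  have hdeg : P.natDegree = 4 := by
    rw [hPdef]; compute_degree!
  have hcard : P.roots.card = 4 := by
    rw [← hdeg]
    exact splits_iff_card_roots.mp (IsAlgClosed.splits P)
  have hroot : ∀ z : ℂ, z ∈ P.roots ↔ z ^ 4 + (a:ℂ) * z + 1 = 0 := by
    intro z
    rw [mem_roots hP0, IsRoot, hPdef]
    simp [eval_add, eval_mul, eval_pow]
  -- real root in (-1, 0)
  obtain ⟨t, htmem, htroot⟩ : ∃ t ∈ Set.Ioo (-1:ℝ) 0, t^4 + a*t + 1 = 0 := by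
    have hcont : ContinuousOn (fun x : ℝ => x^4 + a*x + 1) (Set.Icc (-1) 0) := by
      fun_prop
    have hsub := intermediate_value_Ioo (by norm_num : (-1:ℝ) ≤ 0) hcont
    have h0 : (0:ℝ) ∈ Set.Ioo ((-1:ℝ)^4 + a*(-1) + 1) ((0:ℝ)^4 + a*0 + 1) := by
      constructor <;> simp <;> nlinarith
    obtain ⟨t, ht, ht0⟩ := hsub h0
    exact ⟨t, ht, ht0⟩
  set z₀ : ℂ := (t : ℂ) with hz₀def
  have hz₀root : z₀ ^ 4 + (a:ℂ) * z₀ + 1 = 0 := by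
    rw [hz₀def]
    exact_mod_cast congrArg (Complex.ofReal) htroot
  have hz₀abs : ‖z₀‖ < 1 := by
    rw [hz₀def, Complex.norm_real, Real.norm_eq_abs, abs_lt]
    exact ⟨htmem.1, by linarith [htmem.2]⟩
  have hz₀mem : z₀ ∈ P.roots := (hroot z₀).mpr hz₀root
  -- multiplicity one
  have hmult : P.roots.count z₀ ≤ 1 := by
    rw [count_roots]
    by_contra h
    push_neg at h
    have h2 : 2 ≤ P.rootMultiplicity z₀ := h
    have hderiv : P.derivative = C 4 * X ^ 3 + C (a:ℂ) := by
      rw [hPdef]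
      simp [derivative_add, derivative_X_pow]
      rw [← C_1, ← C_add]; norm_num
    have hd0 : P.derivative ≠ 0 := by
      intro hd
      have : P.derivative.eval 0 = 0 := by rw [hd]; simp
      rw [hderiv] at this
      simp at this
      omega
    have hisroot : P.IsRoot z₀ := (mem_roots hP0).mp hz₀mem
    have h3 : 1 ≤ P.derivative.rootMultiplicity z₀ := by
      rw [derivative_rootMultiplicity_of_root hisroot]
      omega
    have h4 : P.derivative.IsRoot z₀ := by
      rw [← rootMultiplicity_pos hd0]
      omega
    rw [hderiv] at h4
    have h5 : 4 * z₀ ^ 3 + (a:ℂ) = 0 := by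
      simpa [IsRoot] using h4
    have h6 : 4 * t ^ 3 + (a:ℝ) = 0 := by
      rw [hz₀def] at h5
      exact_mod_cast h5
    obtain ⟨ht1, ht2⟩ := htmem
    nlinarith [sq_nonneg (t^2), sq_nonneg t, sq_nonneg (t^3), sq_nonneg (t^2 - 1), sq_nonneg (t^3 + 1)]
  -- filter < 1 has card 1
  set S := P.roots.filter (fun z => ‖z‖ < 1) with hSdef
  have hz₀S : z₀ ∈ S := Multiset.mem_filter.mpr ⟨hz₀mem, hz₀abs⟩
  have hall : ∀ z ∈ S, z = z₀ := by
    intro z hzS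
    obtain ⟨hzmem, hzabs⟩ := Multiset.mem_filter.mp hzS
    exact roots_small_eq ha ((hroot z).mp hzmem) hz₀root hzabs hz₀abs
  have hrep : S = Multiset.replicate S.card z₀ := Multiset.eq_replicate_card.mpr hall
  have hcount : S.count z₀ = S.card := by rw [hrep, Multiset.count_replicate_self, Multiset.card_replicate]
  have hle : S.count z₀ ≤ P.roots.count z₀ := Multiset.count_le_of_le _ (Multiset.filter_le _ _)
  have hge : 1 ≤ S.count z₀ := Multiset.one_le_count_iff_mem.mpr hz₀S
  have hS1 : S.card = 1 := by omega
  refine ⟨?_, hS1⟩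
  -- filter > 1 has card 3
  have hflt : P.roots.filter (fun z => 1 < ‖z‖)
      = P.roots.filter (fun z => ¬ ‖z‖ < 1) := by
    apply Multiset.filter_congr
    intro z hz
    have hne : ‖z‖ ≠ 1 := fun h => no_unit_root ha ((hroot z).mp hz) h
    constructor
    · intro h; exact not_lt.mpr (le_of_lt h)
    · intro h; exact lt_of_le_of_ne (not_lt.mp h) (Ne.symm hne)
  have hsum := congrArg Multiset.card (Multiset.filter_add_not (fun z => ‖z‖ < 1) P.roots)
  rw [Multiset.card_add, hcard, ← hSdef] at hsum
  rw [hflt]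
  omega
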